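/- For every rank-labeled tree, the size of the tree (its total number of nodes) is at least F_{r}, where r is the rank of the root and F_i denotes the i-th Fibonacci number (F_0 = 0, F_1 = 1, F_{i+2} = F_{i+1} + F_i). -/

import Mathlib

/-- `cdiv2 m` is the ceiling of `m / 2` for an integer `m`. -/
def cdiv2 (m : ℤ) : ℤ := ⌈(m : ℚ) / 2⌉

/-- A rooted tree in which every node carries an integer rank and an
ordered finite list of child subtrees. -/
inductive RTree : Type
  | node : ℤ → List RTree → RTree

/-- The rank of the root of a tree. -/
def RTree.rank : RTree → ℤ
  | .node r _ => r

mutual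
  /-- The size of a tree: its total number of nodes. -/
  def RTree.size : RTree → ℕ
    | .node _ cs => 1 + RTree.sizeList cs
  /-- The total number of nodes of a list of trees. -/
  def RTree.sizeList : List RTree → ℕ
    | [] => 0
    | t :: ts => RTree.size t + RTree.sizeList ts
end

/-- The rank of the `(i+1)`-st child from the end of the child list `cs`
(so `i = 0` gives the last child, `i = 1` the second to last), with the
convention that the rank of a missing child is `-1`. -/
def lastRank (cs : List RTree) (i : ℕ) : ℤ :=
  (cs.reverse[i]?).elim (-1) RTree.rank

/-- A rank-labeled tree: every node `z` satisfies `r_z ≥ 0` and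
`r_z ≤ ⌈(r_{z1} + r_{z2})/2⌉ + 1` where `r_{z1}`, `r_{z2}` are the ranks of the
last two children (a missing child having rank `-1`). -/
inductive RTree.Valid : RTree → Prop
  | node (r : ℤ) (cs : List RTree)
      (hr : 0 ≤ r)
      (hrank : r ≤ cdiv2 (lastRank cs 0 + lastRank cs 1) + 1)
      (hcs : ∀ t ∈ cs, RTree.Valid t) :
      RTree.Valid (RTree.node r cs)

/-!
The constraint `r ≤ ⌈(a + b)/2⌉ + 1` on a node with last two child ranks `a ≤ b` allows
`r ≤ b` (then `F_r ≤ F_b`) or `r = b + 1`, which forces `a ≥ b - 1`, so that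
`F_r = F_b + F_{b-1} ≤ F_b + F_a`. Either way `F_r ≤ 1 + F_a + F_b`, and induction on the
validity derivation bounds `F_a + F_b` by the sizes of those two children.
-/

lemma cdiv2_eq_neg_ediv (m : ℤ) : cdiv2 m = -((-m) / 2) := by
  simpa [cdiv2] using Rat.ceil_intCast_div_natCast m 2

lemma fib_toNat_le_of_le_cdiv2 {a b r : ℤ} (h : r ≤ cdiv2 (a + b) + 1) :
    Nat.fib r.toNat ≤ Nat.fib a.toNat + Nat.fib b.toNat + 1 := by
  rw [cdiv2_eq_neg_ediv] at h
  wlog hab : a ≤ b generalizing a b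
  · have := this (a := b) (b := a) (by omega) (by omega)
    omega
  rcases (show r ≤ b ∨ r = b + 1 by omega) with hrb | rfl
  · have := Nat.fib_mono (show r.toNat ≤ b.toNat by omega)
    omega
  by_cases hb : b ≤ 0
  · have := Nat.fib_mono (show (b + 1).toNat ≤ 1 by omega)
    simp only [Nat.fib_one] at this
    omega
  · rw [show (b + 1).toNat = (b.toNat - 1) + 2 by omega, Nat.fib_add_two,
      show b.toNat - 1 + 1 = b.toNat by omega]
    have := Nat.fib_mono (show b.toNat - 1 ≤ a.toNat by omega)
    omega

lemma RTree.sizeList_eq_sum (l : List RTree) : RTree.sizeList l = (l.map RTree.size).sum := by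
  induction l with
  | nil => rfl
  | cons t ts ih => simp [RTree.sizeList, ih]

lemma fib_rank_add_fib_rank_le_sum_size {l : List RTree}
    (h : ∀ t ∈ l, Nat.fib t.rank.toNat ≤ t.size) :
    Nat.fib (l[0]?.elim (-1) RTree.rank).toNat + Nat.fib (l[1]?.elim (-1) RTree.rank).toNat ≤
      (l.map RTree.size).sum := by
  match l, h with
  | [], _ => simp
  | [t], h => simpa using h
  | t₀ :: t₁ :: ts, h =>
    simp only [List.mem_cons, forall_eq_or_imp] at h
    simp only [List.getElem?_cons_zero, List.getElem?_cons_succ, Option.elim_some, List.map_cons,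
      List.sum_cons]
    omega

lemma fib_lastRank_add_le_sizeList {cs : List RTree}
    (h : ∀ t ∈ cs, Nat.fib t.rank.toNat ≤ t.size) :
    Nat.fib (lastRank cs 0).toNat + Nat.fib (lastRank cs 1).toNat ≤ RTree.sizeList cs := by
  rw [RTree.sizeList_eq_sum, ← List.sum_reverse, ← List.map_reverse]
  exact fib_rank_add_fib_rank_le_sum_size fun t ht => h t (List.mem_reverse.mp ht)

/-- The structural lemma: the size of a rank-labeled tree is at least
the Fibonacci number indexed by the rank of its root. -/
theorem structural_lemma (t : RTree) (h : t.Valid) :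
    Nat.fib t.rank.toNat ≤ t.size := by
  induction h with
  | node r cs _ hrank _ ih =>
    have hchildren := fib_lastRank_add_le_sizeList ih
    have hroot := fib_toNat_le_of_le_cdiv2 hrank
    simp only [RTree.rank, RTree.size]
    omega
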